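/- Compact set lemma: let t be a positive integer and A a (2t+2)-compact set, i.e., a finite set of integers containing -1, -2, ..., -(2t+1), whose every other element a satisfies a ≥ 1 and a ≢ 0 mod (2t+2), and which is closed downwards within positive congruence classes mod (2t+2) (if b ∈ A, b > a ≥ 1, b ≡ a mod 2t+2, then a ∈ A). Let max_{2t+2}(A) be the set of elements of A maximal in their congruence class mod (2t+2). Then ∏_{a ∈ max_{2t+2}(A)} (a + 2t + 2)/a = - ∏_{a ∈ A, a > 0} (1 - ((2t+2)/a)²). -/

import Mathlib

open scoped Classical

/-- An integer partition, given by its (0-indexed) sequence of parts. -/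
structure FPartition where
  parts : ℕ → ℕ
  antitone : Antitone parts
  finite_support : (Function.support parts).Finite

namespace FPartition

/-- The weight `|λ|` of a partition: the sum of its parts. -/
noncomputable def weight (p : FPartition) : ℕ := p.finite_support.toFinset.sum p.parts

/-- The conjugate partition, as a function: `conj j` is the number of parts `> j`. -/
noncomputable def conj (p : FPartition) (j : ℕ) : ℕ := {i | j < p.parts i}.ncard

/-- The cells (boxes) of the Ferrers diagram, 0-indexed. -/
def cells (p : FPartition) : Set (ℕ × ℕ) := {c | c.2 < p.parts c.1}

lemma cells_finite (p : FPartition) : p.cells.Finite := by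
  have hsub : p.cells ⊆ (Function.support p.parts) ×ˢ (Set.Iio (p.parts 0)) := by
    rintro ⟨i, j⟩ h
    have hj : j < p.parts i := h
    constructor
    · simp only [Function.mem_support]
      omega
    · exact lt_of_lt_of_le hj (p.antitone (Nat.zero_le i))
  exact (p.finite_support.prod (Set.finite_Iio _)).subset hsub

/-- The cells of the Ferrers diagram as a finset. -/
noncomputable def cellsFinset (p : FPartition) : Finset (ℕ × ℕ) := p.cells_finite.toFinset

/-- Hook length of the (0-indexed) box `(i,j)`:  `λ_i - j + λ*_j - i - 1` (1-indexed formula). -/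
noncomputable def hook (p : FPartition) (i j : ℕ) : ℕ := p.parts i + p.conj j - i - j - 1

/-- The multiset of hook lengths of all boxes of `p`. -/
noncomputable def hooks (p : FPartition) : Multiset ℕ :=
  p.cellsFinset.val.map fun c => p.hook c.1 c.2

/-- The Durfee length: the side of the largest square contained in the diagram. -/
noncomputable def durfee (p : FPartition) : ℕ := {i | i < p.parts i}.ncard

/-- The sign `δ_λ = (-1)^{D(λ)}`. -/
noncomputable def delta (p : FPartition) : ℤ := (-1) ^ p.durfee

/-- Self-conjugate partitions: `λ = λ*`. -/
noncomputable def IsSelfConjugate (p : FPartition) : Prop := ∀ j, p.conj j = p.parts j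

/-- Doubled distinct partitions: `λ_i = λ*_i + 1` for `i` in the Durfee square. -/
noncomputable def IsDoubledDistinct (p : FPartition) : Prop :=
  ∀ i < p.durfee, p.parts i = p.conj i + 1

/-- `t`-cores: partitions with no hook length divisible by `t`. -/
noncomputable def IsCore (t : ℕ) (p : FPartition) : Prop := ∀ h ∈ p.hooks, ¬ t ∣ h

/-- The multiset of signed hook lengths `ε_h · h`, where `ε_h = -1` for boxes strictly
above the diagonal and `1` otherwise. -/
noncomputable def signedHooks (p : FPartition) : Multiset ℤ :=
  p.cellsFinset.val.map fun c => (if c.1 < c.2 then -1 else 1) * (p.hook c.1 c.2 : ℤ)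

/-- The multiset of signed hook lengths `ε_h · h` over boxes whose hook length is a
multiple of `t`. -/
noncomputable def signedHooksT (t : ℕ) (p : FPartition) : Multiset ℤ :=
  (p.cellsFinset.filter fun c => t ∣ p.hook c.1 c.2).val.map
    fun c => (if c.1 < c.2 then -1 else 1) * (p.hook c.1 c.2 : ℤ)

/-- The multiset of principal hook lengths (hooks of diagonal boxes). -/
noncomputable def principalHooks (p : FPartition) : Multiset ℕ :=
  (Finset.range p.durfee).val.map fun i => p.hook i i

lemma conj_set_finite (p : FPartition) (j : ℕ) : {i | j < p.parts i}.Finite := by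
  apply p.finite_support.subset
  intro i hi
  simp only [Set.mem_setOf_eq] at hi
  simp only [Function.mem_support]
  omega

/-- The conjugate partition, as a `Partition`. -/
noncomputable def conjugate (p : FPartition) : FPartition where
  parts := p.conj
  antitone := fun a b hab =>
    Set.ncard_le_ncard (fun i hi => lt_of_le_of_lt hab hi) (p.conj_set_finite a)
  finite_support := by
    apply (Set.finite_Iio (p.parts 0)).subset
    intro j hj
    obtain ⟨i, hi⟩ := Set.nonempty_of_ncard_ne_zero hj
    exact lt_of_lt_of_le hi (p.antitone (Nat.zero_le i))

end FPartition

/-- "Infinite" product `∏_{k ≥ 1} f k` of power series, defined coefficientwise;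
this is the honest infinite product whenever `f k ≡ 1 mod X^k`. -/
noncomputable def Pinf {R : Type*} [CommRing R] (f : ℕ → PowerSeries R) : PowerSeries R :=
  PowerSeries.mk fun n => PowerSeries.coeff n (∏ k ∈ Finset.range (n + 1), f (k + 1))

/-- The Euler-type product `E R m = ∏_{k ≥ 1} (1 - x^{m k}) = (q^m; q^m)_∞`. -/
noncomputable def E (R : Type*) [CommRing R] (m : ℕ) : PowerSeries R :=
  Pinf fun k => 1 - PowerSeries.X ^ (m * k)

/-- The binomial series `(1 - x^m)^a` for an exponent `a` in a binomial ring. -/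
noncomputable def binomSeries {R : Type*} [CommRing R] [BinomialRing R] (a : R) (m : ℕ) :
    PowerSeries R :=
  PowerSeries.mk fun n => if m ∣ n then (-1) ^ (n / m) * Ring.choose a (n / m) else 0

/-- `m` is the position of a vertical step (a `0`) in the canonical bi-infinite binary
word of the partition `p`. -/
def zeroPos (p : FPartition) (m : ℤ) : Prop := ∃ i : ℕ, (p.parts i : ℤ) - i - 1 = m

/-- The Littlewood decomposition, as a relation: `core` and `quot` are the `t`-core and
`t`-quotient of `lam`, expressed via the binary-word encoding: the `k`-th subsequence of
the word of `lam` is the word of `quot k` (up to the shift `s k`), and the `k`-th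
subsequence of the word of `core` is the corresponding flushed word `...000111...` with
the same charge. -/
def IsLittlewood (t : ℕ) (lam core : FPartition) (quot : ℕ → FPartition) : Prop :=
  ∃ s : ℕ → ℤ,
    (∀ k < t, ∀ j : ℤ, zeroPos (quot k) j ↔ zeroPos lam (t * (j + s k) + k)) ∧
    (∀ k < t, ∀ j : ℤ, zeroPos core (t * (j + s k) + k) ↔ j < 0)

/-!
Write `f a = (a + m) / a`. For a positive element `a` of an `m`-compact set `A`, `a - m` lies
in `A` again and `1 - (m / a)^2 = f a / f (a - m)`. The shift `a ↦ a - m` maps the positive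
elements bijectively onto the elements of `A` that are not maximal in their class, so the right
hand side telescopes to `∏_{A, a > 0} f / ∏_{A \ max_m A} f`. On the other hand
`∏_A f = ∏_{max_m A} f · ∏_{A \ max_m A} f = ∏_{A, a > 0} f · ∏_{-m < a < 0} f`, and the
last product is `(-1)^(m-1)`, since `a ↦ -m - a` permutes `(-m, 0)` and sends `a + m` to `-a`.
-/

/-- The paper's `m`-compact sets. -/
structure IsCompactSet (m : ℤ) (A : Finset ℤ) : Prop where
  neg_mem : ∀ j, 0 < j → j < m → -j ∈ A
  pos_of_not_neg : ∀ a ∈ A, ¬(-m < a ∧ a < 0) → 0 < a ∧ ¬ m ∣ a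
  mem_of_lt_of_modEq : ∀ a b, b ∈ A → 1 ≤ a → a < b → a ≡ b [ZMOD m] → a ∈ A

/-- The paper's `max_m(A)`. -/
def maxClass (m : ℤ) (A : Finset ℤ) : Finset ℤ :=
  A.filter fun a => ∀ b ∈ A, a < b → ¬ a ≡ b [ZMOD m]

theorem prod_Ioo_neg_add_div {K : Type*} [Field K] [CharZero K] {m : ℤ} (hm : 0 < m) :
    ∏ a ∈ Finset.Ioo (-m) 0, ((a : K) + m) / a = (-1) ^ (m - 1) := by
  have hreflect :
      ∏ a ∈ Finset.Ioo (-m) 0, ((a : K) + m) = ∏ a ∈ Finset.Ioo (-m) 0, -(a : K) :=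
    Finset.prod_nbij' (fun a => -m - a) (fun a => -m - a)
      (fun a ha => by simp only [Finset.mem_Ioo] at *; omega)
      (fun a ha => by simp only [Finset.mem_Ioo] at *; omega)
      (fun a _ => by ring) (fun a _ => by ring) (fun a _ => by push_cast; ring)
  have hne : ∏ a ∈ Finset.Ioo (-m) 0, (a : K) ≠ 0 :=
    Finset.prod_ne_zero_iff.mpr fun a ha => by
      simp only [Finset.mem_Ioo] at ha
      exact_mod_cast ha.2.ne
  rw [Finset.prod_div_distrib, hreflect, Finset.prod_neg, mul_div_cancel_right₀ _ hne,
    Int.card_Ioo, ← zpow_natCast, Int.toNat_of_nonneg (by omega)]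
  ring_nf

namespace IsCompactSet

variable {m : ℤ} {A : Finset ℤ}

theorem neg_lt (hA : IsCompactSet m A) (hm : 0 < m) {a : ℤ} (ha : a ∈ A) : -m < a := by
  by_contra h
  have := hA.pos_of_not_neg a ha (by omega)
  omega

theorem ne_zero (hA : IsCompactSet m A) {a : ℤ} (ha : a ∈ A) : a ≠ 0 := by
  rintro rfl
  exact (hA.pos_of_not_neg 0 ha (by omega)).1.false

theorem filter_not_pos (hA : IsCompactSet m A) :
    A.filter (fun a => ¬ 0 < a) = Finset.Ioo (-m) 0 := by
  ext a
  simp only [Finset.mem_filter, Finset.mem_Ioo]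
  constructor
  · rintro ⟨ha, hnpos⟩
    by_contra h
    exact hnpos (hA.pos_of_not_neg a ha h).1
  · rintro ⟨h1, h2⟩
    exact ⟨by simpa using hA.neg_mem (-a) (by omega) (by omega), by omega⟩

theorem sub_mem (hA : IsCompactSet m A) (hm : 0 < m) {a : ℤ} (ha : a ∈ A) (hpos : 0 < a) :
    a - m ∈ A := by
  by_cases h : 1 ≤ a - m
  · exact hA.mem_of_lt_of_modEq _ a ha h (by omega) (Int.modEq_iff_dvd.mpr ⟨1, by ring⟩)
  · have hndvd := (hA.pos_of_not_neg a ha (by omega)).2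
    have hne : a ≠ m := by rintro rfl; exact hndvd dvd_rfl
    simpa using hA.neg_mem (m - a) (by omega) (by omega)

theorem add_mem_of_not_mem_maxClass (hA : IsCompactSet m A) (hm : 0 < m) {a : ℤ} (ha : a ∈ A)
    (hmax : a ∉ maxClass m A) : a + m ∈ A := by
  simp only [maxClass, Finset.mem_filter, ha, true_and, not_forall, not_not] at hmax
  obtain ⟨b, hb, hab, hmod⟩ := hmax
  have hle : m ≤ b - a := Int.le_of_dvd (by omega) (Int.ModEq.dvd hmod)
  rcases hle.eq_or_lt with heq | hlt
  · rwa [show a + m = b by omega]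
  · exact hA.mem_of_lt_of_modEq _ b hb (by have := hA.neg_lt hm ha; omega) (by omega)
      ((Int.modEq_iff_dvd.mpr ⟨-1, by ring⟩ : a + m ≡ a [ZMOD m]).trans hmod)

theorem prod_sub_eq_prod_sdiff_maxClass {M : Type*} [CommMonoid M] (hA : IsCompactSet m A)
    (hm : 0 < m) (f : ℤ → M) :
    ∏ a ∈ A.filter (0 < ·), f (a - m) = ∏ a ∈ A \ maxClass m A, f a := by
  refine Finset.prod_nbij' (· - m) (· + m) (fun a ha => ?_) (fun a ha => ?_)
    (fun a _ => by simp) (fun a _ => by simp) (fun a _ => rfl)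
  · obtain ⟨ha, hpos⟩ := Finset.mem_filter.mp ha
    refine Finset.mem_sdiff.mpr ⟨hA.sub_mem hm ha hpos, fun hmax => ?_⟩
    exact (Finset.mem_filter.mp hmax).2 a ha (by omega) (Int.modEq_iff_dvd.mpr ⟨1, by ring⟩)
  · obtain ⟨ha, hmax⟩ := Finset.mem_sdiff.mp ha
    exact Finset.mem_filter.mpr
      ⟨hA.add_mem_of_not_mem_maxClass hm ha hmax, by have := hA.neg_lt hm ha; omega⟩

theorem prod_maxClass {K : Type*} [Field K] [CharZero K] (hA : IsCompactSet m A) (hm : 0 < m) :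
    ∏ a ∈ maxClass m A, ((a : K) + m) / a =
      (-1) ^ (m - 1) * ∏ a ∈ A.filter (0 < ·), (1 - ((m : K) / a) ^ 2) := by
  set f : ℤ → K := fun a => ((a : K) + m) / a
  have hratio : ∀ a ∈ A.filter (0 < ·), 1 - ((m : K) / a) ^ 2 = f a / f (a - m) := by
    intro a ha
    obtain ⟨ha, hpos⟩ := Finset.mem_filter.mp ha
    have ha0 : (a : K) ≠ 0 := by exact_mod_cast hA.ne_zero ha
    have ham : (a : K) - m ≠ 0 := by exact_mod_cast hA.ne_zero (hA.sub_mem hm ha hpos)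
    simp only [f, Int.cast_sub, sub_add_cancel]
    field_simp
    ring
  have hne : ∏ a ∈ A \ maxClass m A, f a ≠ 0 := by
    refine Finset.prod_ne_zero_iff.mpr fun a ha => ?_
    have ha := (Finset.mem_sdiff.mp ha).1
    have ham : a + m ≠ 0 := by have := hA.neg_lt hm ha; omega
    exact div_ne_zero (by exact_mod_cast ham) (by exact_mod_cast hA.ne_zero ha)
  have hsplit_max :
      (∏ a ∈ A \ maxClass m A, f a) * ∏ a ∈ maxClass m A, f a = ∏ a ∈ A, f a :=
    Finset.prod_sdiff (Finset.filter_subset _ A)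
  have hsplit_pos := Finset.prod_filter_mul_prod_filter_not A (0 < ·) f
  rw [hA.filter_not_pos, prod_Ioo_neg_add_div hm] at hsplit_pos
  change ∏ a ∈ maxClass m A, f a = _
  rw [Finset.prod_congr rfl hratio, Finset.prod_div_distrib (s := A.filter (0 < ·)),
    hA.prod_sub_eq_prod_sdiff_maxClass hm, ← mul_right_inj' hne, hsplit_max, ← hsplit_pos]
  field_simp

end IsCompactSet

theorem compact_set_lemma_general (t : ℕ) (A : Finset ℤ)
    (h1 : ∀ j : ℤ, 1 ≤ j → j ≤ 2 * t + 1 → -j ∈ A)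
    (h2 : ∀ a ∈ A, ¬(-(2 * (t : ℤ) + 1) ≤ a ∧ a ≤ -1) →
      1 ≤ a ∧ ¬ ((2 * (t : ℤ) + 2) ∣ a))
    (h3 : ∀ a b : ℤ, b ∈ A → 1 ≤ a → a < b → a ≡ b [ZMOD (2 * t + 2)] → a ∈ A) :
    ∏ a ∈ A.filter (fun a => ∀ b ∈ A, a < b → ¬ a ≡ b [ZMOD (2 * t + 2)]),
        (((a : ℚ) + 2 * t + 2) / a) =
      - ∏ a ∈ A.filter (fun a => 0 < a), (1 - ((2 * (t : ℚ) + 2) / a) ^ 2) := by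
  have hA : IsCompactSet (2 * t + 2) A :=
    ⟨fun j hj1 hj2 => h1 j hj1 (by omega), fun a ha hneg => h2 a ha (by omega), h3⟩
  have key := hA.prod_maxClass (K := ℚ) (by positivity)
  rw [(show Odd (2 * (t : ℤ) + 2 - 1) from ⟨t, by ring⟩).neg_one_zpow, neg_one_mul] at key
  push_cast at key
  simp only [← add_assoc] at key
  exact key

theorem compact_set_lemma (t : ℕ) (ht : 0 < t) (A : Finset ℤ)
    (h1 : ∀ j : ℤ, 1 ≤ j → j ≤ 2 * t + 1 → -j ∈ A)
    (h2 : ∀ a ∈ A, ¬(-(2 * (t : ℤ) + 1) ≤ a ∧ a ≤ -1) →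
      1 ≤ a ∧ ¬ ((2 * (t : ℤ) + 2) ∣ a))
    (h3 : ∀ a b : ℤ, b ∈ A → 1 ≤ a → a < b → a ≡ b [ZMOD (2 * t + 2)] → a ∈ A) :
    ∏ a ∈ A.filter (fun a => ∀ b ∈ A, a < b → ¬ a ≡ b [ZMOD (2 * t + 2)]),
        (((a : ℚ) + 2 * t + 2) / a) =
      - ∏ a ∈ A.filter (fun a => 0 < a), (1 - ((2 * (t : ℚ) + 2) / a) ^ 2) :=
  compact_set_lemma_general t A h1 h2 h3
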